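/- Let k ≥ 2, γ > 0, α > 0 with α small enough that (c+1)²·α·n^{k−1} < γ·C(n−1,k−1) for all large n, where c is a positive integer. Let H be an n-vertex k-graph with (c+1)·δ_1(H) > (1+γ)·C(n−1,k−1). Then for n sufficiently large, every set of c+1 vertices of H contains two vertices u, v such that the number of (k−1)-sets S with both S∪{u} and S∪{v} edges of H is at least 2α·n^{k−1}. -/

import Mathlib

/-!
A vertex of degree `d` has at least `d` neighbourhood `(k-1)`-sets. For the `c+1` vertices of
`T`, Bonferroni's inequality of order two bounds the total number of their neighbourhood sets by
`C(n, k-1)` plus half the sum of the pairwise common-neighbourhood counts. If all of these were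
below `2α n^{k-1}`, the total would be at most `C(n, k-1) + c(c+1) α n^{k-1}`, while the degree
condition makes it exceed `(1+γ) C(n-1, k-1)`. Since `C(n, k-1) - C(n-1, k-1) = C(n-1, k-2)` is at
most `γ/(c+1) · C(n-1, k-1)` once `n ≥ (c+1)(k-1)/γ + k`, the two bounds are incompatible.
-/

open Finset

theorem Nat.two_mul_le_two_add_mul_sub_one (m : ℕ) : 2 * m ≤ 2 + m * (m - 1) := by
  rcases m with _ | _ | m
  · simp
  · simp
  · simp only [Nat.add_sub_cancel]
    nlinarith

/-- Bonferroni's inequality of order two, checked pointwise: an element lying in `m` of the sets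
contributes `2m ≤ 2 + m(m-1)`. -/
theorem Finset.two_mul_sum_card_le {ι α : Type*} [DecidableEq ι] [DecidableEq α]
    (T : Finset ι) (A : ι → Finset α) :
    2 * ∑ i ∈ T, #(A i) ≤ 2 * #(T.biUnion A) + ∑ p ∈ T.offDiag, #(A p.1 ∩ A p.2) := by
  set U := T.biUnion A
  have hsingle : ∑ i ∈ T, #(A i) = ∑ x ∈ U, #(T.filter (x ∈ A ·)) := by
    calc ∑ i ∈ T, #(A i) = ∑ i ∈ T, #(U.bipartiteAbove (fun i x => x ∈ A i) i) := by
          refine sum_congr rfl fun i hi => congrArg card ?_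
          ext x
          simp only [bipartiteAbove, mem_filter, U, mem_biUnion]
          exact ⟨fun h => ⟨⟨i, hi, h⟩, h⟩, And.right⟩
      _ = _ := sum_card_bipartiteAbove_eq_sum_card_bipartiteBelow _
  have hpair : ∑ p ∈ T.offDiag, #(A p.1 ∩ A p.2)
      = ∑ x ∈ U, #(T.filter (x ∈ A ·)).offDiag := by
    calc ∑ p ∈ T.offDiag, #(A p.1 ∩ A p.2)
        = ∑ p ∈ T.offDiag, #(U.bipartiteAbove (fun p x => x ∈ A p.1 ∧ x ∈ A p.2) p) := by
          refine sum_congr rfl fun p hp => congrArg card ?_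
          ext x
          simp only [bipartiteAbove, mem_filter, U, mem_biUnion, mem_inter]
          exact ⟨fun h => ⟨⟨p.1, (mem_offDiag.1 hp).1, h.1⟩, h⟩, And.right⟩
      _ = _ := sum_card_bipartiteAbove_eq_sum_card_bipartiteBelow _
      _ = _ := by
          refine sum_congr rfl fun x _ => congrArg card ?_
          ext p
          simp only [bipartiteBelow, mem_filter, mem_offDiag]
          tauto
  rw [hsingle, hpair, mul_sum, card_eq_sum_ones U, mul_sum, ← sum_add_distrib]
  refine sum_le_sum fun x _ => ?_
  rw [offDiag_card, ← Nat.mul_sub_one]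
  exact Nat.two_mul_le_two_add_mul_sub_one _

section Choose

variable {R : Type*} [Field R] [LinearOrder R] [IsStrictOrderedRing R]

theorem Nat.cast_choose_le_of_mul_le (m s : ℕ) {t γ : R} (h : t * (s + 1) ≤ γ * (m - s : ℕ)) :
    t * m.choose s ≤ γ * m.choose (s + 1) := by
  have key : (m.choose (s + 1) : R) * (s + 1) = m.choose s * (m - s : ℕ) := by
    exact_mod_cast Nat.choose_succ_right_eq m s
  refine le_of_mul_le_mul_right ?_ (by positivity : (0 : R) < s + 1)
  calc t * m.choose s * (s + 1) = m.choose s * (t * (s + 1)) := by ring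
    _ ≤ m.choose s * (γ * (m - s : ℕ)) := by gcongr
    _ = γ * m.choose (s + 1) * (s + 1) := by rw [mul_assoc γ, key]; ring

theorem Nat.cast_choose_succ_le (m r : ℕ) {t γ : R} (hγ : 0 ≤ γ)
    (h : t * r ≤ γ * (m + 1 - r : ℕ)) :
    t * (m + 1).choose r ≤ (t + γ) * m.choose r := by
  rcases r with _ | s
  · simpa using hγ
  · have := Nat.cast_choose_le_of_mul_le m s (by simpa using h)
    rw [Nat.choose_succ_succ', Nat.cast_add]
    linarith

end Choose

section Link

variable {V : Type*} [Fintype V] [DecidableEq V]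

def link (H : Finset (Finset V)) (r : ℕ) (w : V) : Finset (Finset V) :=
  (univ.powersetCard r).filter (fun S => S ∪ {w} ∈ H)

theorem card_filter_mem_le_card_link {H : Finset (Finset V)} {k : ℕ}
    (hH : ∀ e ∈ H, e.card = k) (w : V) :
    #(H.filter (w ∈ ·)) ≤ #(link H (k - 1) w) := by
  refine card_le_card_of_injOn (·.erase w) (fun e he => ?_) (fun e he e' he' hee => ?_)
  · rw [mem_coe, mem_filter] at he
    rw [mem_coe, link, mem_filter, mem_powersetCard, card_erase_of_mem he.2, hH e he.1,
      union_singleton, insert_erase he.2]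
    exact ⟨⟨subset_univ _, rfl⟩, he.1⟩
  · rw [mem_coe, mem_filter] at he he'
    rw [← insert_erase he.2, ← insert_erase he'.2]
    exact congrArg (insert w) hee

theorem link_inter_link (H : Finset (Finset V)) (r : ℕ) (u v : V) :
    link H r u ∩ link H r v = (univ.powersetCard r).filter (fun S => S ∪ {u} ∈ H ∧ S ∪ {v} ∈ H) :=
  (filter_and _ _ _).symm

theorem card_mul_lt_sum_card_link {H : Finset (Finset V)} {k : ℕ} (hH : ∀ e ∈ H, e.card = k)
    {T : Finset V} (hT : T.Nonempty) {a : ℝ} (hdeg : ∀ w ∈ T, a < #(H.filter (w ∈ ·))) :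
    #T * a < ∑ w ∈ T, (#(link H (k - 1) w) : ℝ) := by
  calc #T * a = ∑ w ∈ T, a := by rw [sum_const, nsmul_eq_mul]
    _ < ∑ w ∈ T, (#(H.filter (w ∈ ·)) : ℝ) := sum_lt_sum_of_nonempty hT hdeg
    _ ≤ ∑ w ∈ T, (#(link H (k - 1) w) : ℝ) :=
      sum_le_sum fun w _ => by exact_mod_cast card_filter_mem_le_card_link hH w

theorem two_mul_sum_card_link_le (H : Finset (Finset V)) (r : ℕ) {T : Finset V} {b : ℝ}
    (hb : ∀ u ∈ T, ∀ v ∈ T, u ≠ v → (#(link H r u ∩ link H r v) : ℝ) ≤ b) :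
    2 * ∑ w ∈ T, (#(link H r w) : ℝ) ≤ 2 * (Fintype.card V).choose r + #T.offDiag * b := by
  have hU : #(T.biUnion (link H r)) ≤ (Fintype.card V).choose r := by
    rw [← card_univ, ← card_powersetCard]
    exact card_le_card (biUnion_subset.2 fun w _ => filter_subset _ _)
  have hpairs : ∑ p ∈ T.offDiag, (#(link H r p.1 ∩ link H r p.2) : ℝ) ≤ #T.offDiag * b := by
    rw [← nsmul_eq_mul]
    refine sum_le_card_nsmul _ _ _ fun p hp => ?_
    obtain ⟨hu, hv, huv⟩ := mem_offDiag.1 hp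
    exact hb _ hu _ hv huv
  have hbonf : 2 * ∑ w ∈ T, #(link H r w)
      ≤ 2 * (Fintype.card V).choose r + ∑ p ∈ T.offDiag, #(link H r p.1 ∩ link H r p.2) := by
    have := T.two_mul_sum_card_le (link H r)
    omega
  have := (Nat.cast_le (α := ℝ)).2 hbonf
  push_cast at this
  linarith

end Link

theorem stmt_6_general (k c : ℕ) (γ α : ℝ)
    (hγ : 0 < γ) :
    ∃ n₀ : ℕ, ∀ n : ℕ, n₀ ≤ n →
      ((c + 1 : ℝ)^2 * α * (n : ℝ)^(k-1) < γ * ((n-1).choose (k-1) : ℝ)) →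
      ∀ (V : Type) [Fintype V] [DecidableEq V], Fintype.card V = n →
      ∀ H : Finset (Finset V), (∀ e ∈ H, e.card = k) →
      (∀ w : V, (1 + γ) * ((n-1).choose (k-1) : ℝ)
        < (c + 1 : ℝ) * ((H.filter (fun e => w ∈ e)).card : ℝ)) →
      ∀ T : Finset V, T.card = c + 1 →
      ∃ u ∈ T, ∃ v ∈ T, u ≠ v ∧
        2 * α * (n : ℝ)^(k-1) ≤
          (((Finset.univ.powersetCard (k-1) : Finset (Finset V)).filter
            (fun S => S ∪ {u} ∈ H ∧ S ∪ {v} ∈ H)).card : ℝ) := by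
  refine ⟨⌈(c + 1) * (k - 1 : ℕ) / γ⌉₊ + k, fun n hn hsmall V _ _ hcard H hH hdeg T hT => ?_⟩
  by_contra! hfar
  obtain ⟨m, rfl⟩ : ∃ m, n = m + 1 :=
    Nat.exists_eq_add_one.2 (hT ▸ hcard ▸ T.card_le_univ |>.trans_lt' (by omega))
  rw [Nat.add_sub_cancel] at hsmall hdeg
  set D : ℝ := (m.choose (k - 1) : ℝ)
  have hc : (0 : ℝ) < c + 1 := by positivity
  have hbinom : (c + 1 : ℝ) * (m + 1).choose (k - 1) ≤ (c + 1 + γ) * D := by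
    refine Nat.cast_choose_succ_le m (k - 1) hγ.le ?_
    have hceil : ((c + 1) * (k - 1 : ℕ) / γ : ℝ) ≤ (m + 1 - (k - 1) : ℕ) :=
      (Nat.le_ceil _).trans (Nat.cast_le.2 (by omega))
    linarith [(div_le_iff₀' hγ).1 hceil]
  have hlow := card_mul_lt_sum_card_link hH (card_pos (s := T) |>.1 (by omega))
    fun w _ => (div_lt_iff₀' hc).2 (hdeg w)
  have hup := two_mul_sum_card_link_le H (k - 1) (T := T)
    fun u hu v hv huv => (link_inter_link H _ u v ▸ hfar u hu v hv huv).le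
  rw [hT, Nat.cast_add_one, mul_div_cancel₀ _ hc.ne'] at hlow
  rw [offDiag_card, hT, ← Nat.mul_sub_one, Nat.add_sub_cancel, hcard] at hup
  push_cast at hup hsmall
  have hsum : (1 + γ) * D < (m + 1).choose (k - 1) + (c + 1) * c * (α * (m + 1) ^ (k - 1)) := by
    linarith
  -- times `c + 1`, the right side is at most `(c + 1 + γ) D + c γ D = (c + 1)(1 + γ) D`
  have := mul_lt_mul_of_pos_left hsum hc
  have := mul_le_mul_of_nonneg_left hsmall.le (Nat.cast_nonneg c : (0 : ℝ) ≤ c)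
  linarith

/-- If (c+1)·δ₁(H) > (1+γ)·C(n−1,k−1) then, for large n, every set of c+1
vertices contains two that are (2α,1)-reachable: they have at least
2α·n^{k−1} common reachable (k−1)-sets. -/
theorem stmt_6 (k c : ℕ) (hk : 2 ≤ k) (hc : 1 ≤ c) (γ α : ℝ)
    (hγ : 0 < γ) (hα : 0 < α) :
    ∃ n₀ : ℕ, ∀ n : ℕ, n₀ ≤ n →
      ((c + 1 : ℝ)^2 * α * (n : ℝ)^(k-1) < γ * ((n-1).choose (k-1) : ℝ)) →
      ∀ (V : Type) [Fintype V] [DecidableEq V], Fintype.card V = n →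
      ∀ H : Finset (Finset V), (∀ e ∈ H, e.card = k) →
      (∀ w : V, (1 + γ) * ((n-1).choose (k-1) : ℝ)
        < (c + 1 : ℝ) * ((H.filter (fun e => w ∈ e)).card : ℝ)) →
      ∀ T : Finset V, T.card = c + 1 →
      ∃ u ∈ T, ∃ v ∈ T, u ≠ v ∧
        2 * α * (n : ℝ)^(k-1) ≤
          (((Finset.univ.powersetCard (k-1) : Finset (Finset V)).filter
            (fun S => S ∪ {u} ∈ H ∧ S ∪ {v} ∈ H)).card : ℝ) :=
  stmt_6_general k c γ α hγ
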